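/- Under the new neighborhood semantics, Δ⊤ defines property (n) on c-frames (F validates Δ⊤ iff S ∈ N(s) for all s), and Δp ∧ Δq → Δ(p∧q) defines property (i) on c-frames (F validates it iff each N(s) is closed under binary intersections). -/

import Mathlib

inductive CForm : Type where
  | atom : ℕ → CForm
  | neg : CForm → CForm
  | conj : CForm → CForm → CForm
  | delta : CForm → CForm

/-- p → q abbreviates ¬(p ∧ ¬q) -/
def CForm.impl (φ ψ : CForm) : CForm := .neg (.conj φ (.neg ψ))
/-- p ∨ q abbreviates ¬(¬p ∧ ¬q) -/
def CForm.disj (φ ψ : CForm) : CForm := .neg (.conj (.neg φ) (.neg ψ))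

structure NbhModel (S : Type) where
  N : S → Set (Set S)
  V : ℕ → Set S

/-- new neighborhood semantics -/
def newSat {S : Type} (M : NbhModel S) : S → CForm → Prop
  | s, .atom p => s ∈ M.V p
  | s, .neg φ => ¬ newSat M s φ
  | s, .conj φ ψ => newSat M s φ ∧ newSat M s ψ
  | s, .delta φ => {t | newSat M t φ} ∈ M.N s

/-- old neighborhood semantics -/
def oldSat {S : Type} (M : NbhModel S) : S → CForm → Prop
  | s, .atom p => s ∈ M.V p
  | s, .neg φ => ¬ oldSat M s φ
  | s, .conj φ ψ => oldSat M s φ ∧ oldSat M s ψ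
  | s, .delta φ => {t | oldSat M t φ} ∈ M.N s ∨ {t | oldSat M t φ}ᶜ ∈ M.N s

/-- property (c): closure under complements -/
def HasC {S : Type} (N : S → Set (Set S)) : Prop :=
  ∀ s X, X ∈ N s → Xᶜ ∈ N s

/-- a c-model -/
def IsCModel {S : Type} (M : NbhModel S) : Prop := HasC M.N

/-- the c-variation of a neighborhood model -/
def cVar {S : Type} (M : NbhModel S) : NbhModel S :=
  ⟨fun s => {X | X ∈ M.N s ∨ Xᶜ ∈ M.N s}, M.V⟩

structure KModel (S : Type) where
  R : S → S → Prop
  V : ℕ → Set S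

/-- Kripke semantics for contingency logic -/
def kSat {S : Type} (M : KModel S) : S → CForm → Prop
  | s, .atom p => s ∈ M.V p
  | s, .neg φ => ¬ kSat M s φ
  | s, .conj φ ψ => kSat M s φ ∧ kSat M s ψ
  | s, .delta φ => ∀ t u, M.R s t → M.R s u → (kSat M t φ ↔ kSat M u φ)

/-- the qf-variation of a Kripke model -/
def qfVar {S : Type} (M : KModel S) : NbhModel S :=
  ⟨fun s => {X | {t | M.R s t} ⊆ X ∨ {t | M.R s t} ⊆ Xᶜ}, M.V⟩

/-- (U,U') is Z-coherent -/
def ZCoherent {S S' : Type} (Z : S → S' → Prop) (U : Set S) (U' : Set S') : Prop :=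
  ∀ x y, Z x y → (x ∈ U ↔ y ∈ U')

/-- a c-bisimulation (also: qf-bisimulation, monotonic c-bisimulation): atoms agree
and Z-coherent pairs are matched in neighborhoods -/
def IsCBisim {S S' : Type} (M : NbhModel S) (M' : NbhModel S') (Z : S → S' → Prop) : Prop :=
  ∀ s s', Z s s' →
    ((∀ p, s ∈ M.V p ↔ s' ∈ M'.V p) ∧
     ∀ U U', ZCoherent Z U U' → (U ∈ M.N s ↔ U' ∈ M'.N s'))

/-- an nbh-Δ-bisimulation -/
def IsNbhDeltaBisim {S S' : Type} (M : NbhModel S) (M' : NbhModel S') (Z : S → S' → Prop) : Prop :=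
  ∀ s s', Z s s' →
    ((∀ p, s ∈ M.V p ↔ s' ∈ M'.V p) ∧
     ∀ U U', ZCoherent Z U U' →
       ((U ∈ M.N s ∨ Uᶜ ∈ M.N s) ↔ (U' ∈ M'.N s' ∨ U'ᶜ ∈ M'.N s')))

/-- property (s): closure under supersets (monotonicity) -/
def HasMono {S : Type} (N : S → Set (Set S)) : Prop :=
  ∀ s X Y, X ∈ N s → X ⊆ Y → Y ∈ N s

/-- a c-monotonic bisimulation -/
def IsCMonBisim {S S' : Type} (M : NbhModel S) (M' : NbhModel S') (Z : S → S' → Prop) : Prop :=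
  ∀ s s', Z s s' →
    ((∀ p, s ∈ M.V p ↔ s' ∈ M'.V p) ∧
     (∀ X, X ∈ M.N s → ∃ X' ∈ M'.N s', ∀ x' ∈ X', ∃ x ∈ X, Z x x') ∧
     (∀ X', X' ∈ M'.N s' → ∃ X ∈ M.N s, ∀ x ∈ X, ∃ x' ∈ X', Z x x'))

/-- quasi-filter: (n), (i), (c), (ws) -/
def IsQuasiFilter {S : Type} (N : S → Set (Set S)) : Prop :=
  ∀ s, (Set.univ ∈ N s) ∧
    (∀ X Y, X ∈ N s → Y ∈ N s → X ∩ Y ∈ N s) ∧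
    (∀ X, X ∈ N s → Xᶜ ∈ N s) ∧
    (∀ X, X ∈ N s → ∀ Y Z : Set S, X ∪ Y ∈ N s ∨ Xᶜ ∪ Z ∈ N s)

/-- a rel-Δ-bisimulation between Kripke models -/
def IsRelDeltaBisim {S S' : Type} (M : KModel S) (M' : KModel S') (Z : S → S' → Prop) : Prop :=
  ∀ s s', Z s s' →
    ((∀ p, s ∈ M.V p ↔ s' ∈ M'.V p) ∧
     ∀ U U', ZCoherent Z U U' →
       (({t | M.R s t} ⊆ U ∨ {t | M.R s t} ⊆ Uᶜ) ↔
        ({t | M'.R s' t} ⊆ U' ∨ {t | M'.R s' t} ⊆ U'ᶜ)))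


namespace CForm

variable {S : Type} {M : NbhModel S}

@[simp]
theorem newSat_impl {s : S} {φ ψ : CForm} :
    newSat M s (φ.impl ψ) ↔ (newSat M s φ → newSat M s ψ) := by
  simp only [impl, newSat, not_and, not_not]

theorem newSat_conj {s : S} {φ ψ : CForm} :
    newSat M s (φ.conj ψ) ↔ newSat M s φ ∧ newSat M s ψ := Iff.rfl

theorem newSat_delta {s : S} {φ : CForm} :
    newSat M s (delta φ) ↔ {t | newSat M t φ} ∈ M.N s := Iff.rfl

@[simp]
theorem setOf_newSat_atom (p : ℕ) : {t | newSat M t (atom p)} = M.V p := rfl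

@[simp]
theorem setOf_newSat_conj (φ ψ : CForm) :
    {t | newSat M t (φ.conj ψ)} = {t | newSat M t φ} ∩ {t | newSat M t ψ} := rfl

@[simp]
theorem setOf_newSat_impl_self (φ : CForm) : {t | newSat M t (φ.impl φ)} = Set.univ := by
  ext t
  simp

theorem newSat_delta_impl_self {s : S} (φ : CForm) :
    newSat M s (delta (φ.impl φ)) ↔ Set.univ ∈ M.N s := by
  rw [newSat_delta, setOf_newSat_impl_self]

end CForm

open CForm

theorem validates_delta_top_iff_univ_mem {S : Type} (N : S → Set (Set S)) :
    (∀ (V : ℕ → Set S) (s : S), newSat ⟨N, V⟩ s (.delta (.impl (.atom 0) (.atom 0)))) ↔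
      ∀ s : S, Set.univ ∈ N s := by
  simp only [newSat_delta_impl_self]
  exact ⟨fun h => h fun _ => ∅, fun h _ => h⟩

theorem validates_delta_conj_iff_inter_mem {S : Type} (N : S → Set (Set S)) :
    (∀ (V : ℕ → Set S) (s : S),
        newSat ⟨N, V⟩ s (.impl (.conj (.delta (.atom 0)) (.delta (.atom 1)))
          (.delta (.conj (.atom 0) (.atom 1))))) ↔
      ∀ (s : S) (X Y : Set S), X ∈ N s → Y ∈ N s → X ∩ Y ∈ N s := by
  simp only [newSat_impl, newSat_delta, setOf_newSat_conj, setOf_newSat_atom]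
  simp only [newSat_conj, newSat_delta, setOf_newSat_atom, and_imp]
  refine ⟨fun h s X Y => ?_, fun h V s => h s (V 0) (V 1)⟩
  simpa using h (fun n => if n = 0 then X else Y) s

theorem stmt18_general {S : Type} (N : S → Set (Set S)) :
    ((∀ (V : ℕ → Set S) (s : S),
        newSat ⟨N, V⟩ s (.delta (.impl (.atom 0) (.atom 0)))) ↔
      (∀ s : S, Set.univ ∈ N s)) ∧
    ((∀ (V : ℕ → Set S) (s : S),
        newSat ⟨N, V⟩ s (.impl (.conj (.delta (.atom 0)) (.delta (.atom 1)))
          (.delta (.conj (.atom 0) (.atom 1))))) ↔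
      (∀ (s : S) (X Y : Set S), X ∈ N s → Y ∈ N s → X ∩ Y ∈ N s)) :=
  ⟨validates_delta_top_iff_univ_mem N, validates_delta_conj_iff_inter_mem N⟩

/-- on c-frames, Δ⊤ defines (n) and Δp ∧ Δq → Δ(p∧q) defines (i). -/
theorem stmt18 {S : Type} [Nonempty S] (N : S → Set (Set S)) (hc : HasC N) :
    ((∀ (V : ℕ → Set S) (s : S),
        newSat ⟨N, V⟩ s (.delta (.impl (.atom 0) (.atom 0)))) ↔
      (∀ s : S, Set.univ ∈ N s)) ∧
    ((∀ (V : ℕ → Set S) (s : S),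
        newSat ⟨N, V⟩ s (.impl (.conj (.delta (.atom 0)) (.delta (.atom 1)))
          (.delta (.conj (.atom 0) (.atom 1))))) ↔
      (∀ (s : S) (X Y : Set S), X ∈ N s → Y ∈ N s → X ∩ Y ∈ N s)) :=
  stmt18_general N
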